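/- Let m ≥ 2, let A be an m×m binary matrix all of whose row sums a_i = Σ_{j=0}^{m−1} A(i,j) are positive, and let 1 ≤ p < q be integers. Set T = Σ_{j=0}^{m−1} a_j^{p/q}, and define μ₂([i]) = a_i^{p/q}/T for 0 ≤ i ≤ m−1 and μ₂([ij]) = a_i^{p/q − 1} A(i,j) / T for 0 ≤ i, j ≤ m−1. Then μ₂([i]) = Σ_{j=0}^{m−1} μ₂([ij]) for every i, and (1/p − 1/q)·H₁ + (1/q)·H₂ = (1/p)·log_m T, where H₁ = −Σ_{i=0}^{m−1} μ₂([i]) log_m μ₂([i]) and H₂ = −Σ_{i,j=0}^{m−1} μ₂([ij]) log_m μ₂([ij]), with the convention 0·log_m 0 = 0. -/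

import Mathlib

open Filter Topology

/-- Sequences over the alphabet `{0,…,m−1}`; coordinate `n` represents position `n+1`. -/
def ASeq (m : ℕ) : Type := ℕ → Fin m

open Classical in
/-- The distance `d(x,y) = m^{-min{i ≥ 1 : x_i ≠ y_i}}` on `Σ_m^ℕ`
(in the 0-based representation, `min{i ≥ 1 : x_i ≠ y_i} = firstDiff x y + 1`). -/
noncomputable def aseqDist (m : ℕ) (x y : ASeq m) : ℝ :=
  if x = y then 0 else ((m : ℝ)⁻¹) ^ (PiNat.firstDiff x y + 1)

lemma aseqDist_self (m : ℕ) (x : ASeq m) : aseqDist m x x = 0 := by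
  simp [aseqDist]

lemma aseqDist_comm (m : ℕ) (x y : ASeq m) : aseqDist m x y = aseqDist m y x := by
  unfold aseqDist
  by_cases h : x = y
  · simp [h]
  · rw [if_neg h, if_neg (Ne.symm h)]
    exact congrArg (fun n : ℕ => ((m : ℝ)⁻¹) ^ (n + 1)) (PiNat.firstDiff_comm ..)

lemma aseqDist_triangle (m : ℕ) (x y z : ASeq m) :
    aseqDist m x z ≤ aseqDist m x y + aseqDist m y z := by
  classical
  unfold aseqDist
  rcases Nat.eq_zero_or_pos m with hm | hm
  · subst hm; exact (x 0).elim0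
  have hr0 : (0:ℝ) ≤ (m : ℝ)⁻¹ := by positivity
  have hr1 : (m : ℝ)⁻¹ ≤ 1 := by
    rw [inv_le_one_iff₀]; right; exact_mod_cast hm
  by_cases hxz : x = z
  · rw [if_pos hxz]
    have h1 : (0:ℝ) ≤ if x = y then 0 else ((m : ℝ)⁻¹) ^ (PiNat.firstDiff x y + 1) := by
      split <;> positivity
    have h2 : (0:ℝ) ≤ if y = z then 0 else ((m : ℝ)⁻¹) ^ (PiNat.firstDiff y z + 1) := by
      split <;> positivity
    linarith
  · rw [if_neg hxz]
    by_cases hxy : x = y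
    · subst hxy; rw [if_pos rfl, if_neg hxz]; simp
    by_cases hyz : y = z
    · subst hyz; rw [if_pos rfl, if_neg hxz]; simp
    rw [if_neg hxy, if_neg hyz]
    have hmin := PiNat.min_firstDiff_le x y z hxz
    have hpos1 : (0:ℝ) ≤ ((m : ℝ)⁻¹) ^ (PiNat.firstDiff x y + 1) := by positivity
    have hpos2 : (0:ℝ) ≤ ((m : ℝ)⁻¹) ^ (PiNat.firstDiff y z + 1) := by positivity
    rcases le_total (PiNat.firstDiff x y) (PiNat.firstDiff y z) with hcmp | hcmp
    · have : ((m : ℝ)⁻¹) ^ (PiNat.firstDiff x z + 1) ≤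
          ((m : ℝ)⁻¹) ^ (PiNat.firstDiff x y + 1) := by
        apply pow_le_pow_of_le_one hr0 hr1
        simp only [min_eq_left hcmp] at hmin; omega
      linarith
    · have : ((m : ℝ)⁻¹) ^ (PiNat.firstDiff x z + 1) ≤
          ((m : ℝ)⁻¹) ^ (PiNat.firstDiff y z + 1) := by
        apply pow_le_pow_of_le_one hr0 hr1
        simp only [min_eq_right hcmp] at hmin; omega
      linarith

lemma aseqDist_eq_zero (m : ℕ) (x y : ASeq m) (h : aseqDist m x y = 0) : x = y := by
  by_contra hxy
  unfold aseqDist at h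
  rw [if_neg hxy] at h
  rcases Nat.eq_zero_or_pos m with hm | hm
  · subst hm; exact (x 0).elim0
  have : (0:ℝ) < ((m : ℝ)⁻¹) ^ (PiNat.firstDiff x y + 1) := by positivity
  linarith

noncomputable instance ASeq.metricSpace (m : ℕ) : MetricSpace (ASeq m) where
  dist := aseqDist m
  dist_self := aseqDist_self m
  dist_comm := aseqDist_comm m
  dist_triangle := aseqDist_triangle m
  eq_of_dist_eq_zero := aseqDist_eq_zero m _ _

/-- The affine multiplicative subshift `X_A^{(p,q;a,b)}`:
`A(x_{pk+a}, x_{qk+b}) = 1` for all `k ≥ 1` with `pk+a ≥ 1`, `qk+b ≥ 1`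
(position `n ≥ 1` is coordinate `n−1`). -/
def affineSubshift (m : ℕ) (A : Matrix (Fin m) (Fin m) ℕ) (p q : ℕ) (a b : ℤ) :
    Set (ASeq m) :=
  {x | ∀ k : ℕ, 1 ≤ k → 1 ≤ (p : ℤ) * k + a → 1 ≤ (q : ℤ) * k + b →
      A (x (((p : ℤ) * k + a).toNat - 1)) (x (((q : ℤ) * k + b).toNat - 1)) = 1}

/-- The number of patterns of `X` on positions `{1,…,n}`. -/
noncomputable def patternCount (m : ℕ) (X : Set (ASeq m)) (n : ℕ) : ℕ :=
  Set.ncard ((fun (x : ASeq m) (i : Fin n) => x i) '' X)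

/-- `|B|`: the sum of all entries of a matrix. -/
def entrySum {m : ℕ} (B : Matrix (Fin m) (Fin m) ℕ) : ℕ := ∑ i, ∑ j, B i j

/-- The row sums `a_i` of a matrix. -/
def rowSum {m : ℕ} (A : Matrix (Fin m) (Fin m) ℕ) (i : Fin m) : ℕ := ∑ j, A i j

/-- `T = Σ_{j} a_j^{p/q}`. -/
noncomputable def Tsum (m : ℕ) (A : Matrix (Fin m) (Fin m) ℕ) (p q : ℕ) : ℝ :=
  ∑ j, (rowSum A j : ℝ) ^ ((p : ℝ) / (q : ℝ))

/-- `μ₂([i]) = a_i^{p/q} / T`. -/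
noncomputable def muOne (m : ℕ) (A : Matrix (Fin m) (Fin m) ℕ) (p q : ℕ) (i : Fin m) : ℝ :=
  (rowSum A i : ℝ) ^ ((p : ℝ) / (q : ℝ)) / Tsum m A p q

/-- `μ₂([ij]) = a_i^{p/q − 1} A(i,j) / T`. -/
noncomputable def muTwo (m : ℕ) (A : Matrix (Fin m) (Fin m) ℕ) (p q : ℕ) (i j : Fin m) : ℝ :=
  (rowSum A i : ℝ) ^ ((p : ℝ) / (q : ℝ) - 1) * (A i j : ℝ) / Tsum m A p q

/-!
Write `r = p/q`, `L = log_m T` and `S = Σ_i μ₂([i]) log_m a_i`. Since `A(i,j) ∈ {0,1}`, every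
nonzero `μ₂([ij])` equals `a_i^{r-1}/T`, and `Σ_j A(i,j) = a_i` turns the `j`-sums back into
`μ₂([i])`. Hence `H₁ = L - r S` and `H₂ = L - (r - 1) S`, and the coefficient of `S` in
`(1/p - 1/q) H₁ + (1/q) H₂` is `r/p - 1/q = 0`.
-/

open Finset

lemma Finset.sum_mul_sub_of_sum_eq_one {ι R : Type*} [CommRing R] (s : Finset ι) {w x : ι → R}
    (hw : ∑ i ∈ s, w i = 1) (c L : R) :
    ∑ i ∈ s, w i * (c * x i - L) = c * ∑ i ∈ s, w i * x i - L := by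
  simp only [mul_sub, sum_sub_distrib, ← sum_mul, hw, one_mul, mul_sum]
  congr 1
  exact sum_congr rfl fun i _ => by ring

section RowSumMeasure

variable {m : ℕ} {A : Matrix (Fin m) (Fin m) ℕ} {p q : ℕ}

lemma Tsum_pos [NeZero m] (hrow : ∀ i, 0 < rowSum A i) : 0 < Tsum m A p q :=
  sum_pos (fun j _ => Real.rpow_pos_of_pos (by exact_mod_cast hrow j) _) univ_nonempty

lemma sum_cast_eq_rowSum (i : Fin m) : ∑ j, (A i j : ℝ) = rowSum A i := by
  simp [rowSum]

lemma muOne_eq_sum_muTwo {i : Fin m} (hi : rowSum A i ≠ 0) :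
    muOne m A p q i = ∑ j, muTwo m A p q i j := by
  simp only [muOne, muTwo, ← sum_div, ← mul_sum, sum_cast_eq_rowSum,
    Real.rpow_sub_one (Nat.cast_ne_zero.mpr hi)]
  field_simp

lemma sum_muOne (hT : Tsum m A p q ≠ 0) : ∑ i, muOne m A p q i = 1 := by
  simp only [muOne, ← sum_div]
  exact div_self hT

variable {b : ℝ}

lemma logb_muOne {i : Fin m} (hi : 0 < rowSum A i) (hT : Tsum m A p q ≠ 0) :
    Real.logb b (muOne m A p q i) =
      (p / q : ℝ) * Real.logb b (rowSum A i) - Real.logb b (Tsum m A p q) := by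
  have ha : (0 : ℝ) < rowSum A i := by exact_mod_cast hi
  rw [muOne, Real.logb_div (Real.rpow_pos_of_pos ha _).ne' hT,
    Real.logb_rpow_eq_mul_logb_of_pos ha]

lemma muTwo_mul_logb_muTwo (hbin : ∀ i j, A i j ≤ 1) {i : Fin m} (hi : 0 < rowSum A i)
    (hT : Tsum m A p q ≠ 0) (j : Fin m) :
    muTwo m A p q i j * Real.logb b (muTwo m A p q i j) =
      muTwo m A p q i j *
        ((p / q - 1 : ℝ) * Real.logb b (rowSum A i) - Real.logb b (Tsum m A p q)) := by
  have ha : (0 : ℝ) < rowSum A i := by exact_mod_cast hi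
  obtain hij | hij : A i j = 0 ∨ A i j = 1 := by have := hbin i j; omega
  · simp [muTwo, hij]
  · rw [muTwo, hij, Nat.cast_one, mul_one, Real.logb_div (Real.rpow_pos_of_pos ha _).ne' hT,
      Real.logb_rpow_eq_mul_logb_of_pos ha]

lemma sum_muOne_mul_logb_muOne (hrow : ∀ i, 0 < rowSum A i) (hT : Tsum m A p q ≠ 0) :
    ∑ i, muOne m A p q i * Real.logb b (muOne m A p q i) =
      (p / q : ℝ) * ∑ i, muOne m A p q i * Real.logb b (rowSum A i) -
        Real.logb b (Tsum m A p q) := by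
  simp only [logb_muOne (hrow _) hT]
  exact sum_mul_sub_of_sum_eq_one _ (sum_muOne hT) _ _

lemma sum_sum_muTwo_mul_logb_muTwo (hbin : ∀ i j, A i j ≤ 1) (hrow : ∀ i, 0 < rowSum A i)
    (hT : Tsum m A p q ≠ 0) :
    ∑ i, ∑ j, muTwo m A p q i j * Real.logb b (muTwo m A p q i j) =
      (p / q - 1 : ℝ) * ∑ i, muOne m A p q i * Real.logb b (rowSum A i) -
        Real.logb b (Tsum m A p q) := by
  simp only [muTwo_mul_logb_muTwo hbin (hrow _) hT, ← sum_mul,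
    ← muOne_eq_sum_muTwo (hrow _).ne']
  exact sum_mul_sub_of_sum_eq_one _ (sum_muOne hT) _ _

end RowSumMeasure

theorem mu_two_entropy_general
    (m : ℕ) (hm : 2 ≤ m) (A : Matrix (Fin m) (Fin m) ℕ)
    (hbin : ∀ i j, A i j ≤ 1)
    (hrow : ∀ i, 0 < rowSum A i)
    (p q : ℕ) (hp : 1 ≤ p) :
    (∀ i, muOne m A p q i = ∑ j, muTwo m A p q i j) ∧
    (1 / (p : ℝ) - 1 / (q : ℝ)) *
        (-∑ i, muOne m A p q i * Real.logb m (muOne m A p q i)) +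
      (1 / (q : ℝ)) *
        (-∑ i, ∑ j, muTwo m A p q i j * Real.logb m (muTwo m A p q i j)) =
      (1 / (p : ℝ)) * Real.logb m (Tsum m A p q) := by
  have : NeZero m := ⟨by omega⟩
  have hT := (Tsum_pos (p := p) (q := q) hrow).ne'
  refine ⟨fun i => muOne_eq_sum_muTwo (hrow i).ne', ?_⟩
  rw [sum_muOne_mul_logb_muOne hrow hT, sum_sum_muTwo_mul_logb_muTwo hbin hrow hT]
  have hp0 : (p : ℝ) ≠ 0 := by positivity
  have hcoeff : (p / q : ℝ) / p = 1 / q := by rw [div_div_cancel_left' hp0, one_div]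
  linear_combination -(∑ i, muOne m A p q i * Real.logb m (rowSum A i)) * hcoeff

/-- The optimizing measure `μ₂` of Proposition 3.2(1): `μ₂([i]) = Σ_j μ₂([ij])` and
`(1/p − 1/q)·H₁ + (1/q)·H₂ = (1/p)·log_m T` where `H₁, H₂` are the entropies of `μ₂`
on `1`- and `2`-cylinders (with the convention `0·log_m 0 = 0`, as `Real.logb m 0 = 0`). -/
theorem mu_two_entropy
    (m : ℕ) (hm : 2 ≤ m) (A : Matrix (Fin m) (Fin m) ℕ)
    (hbin : ∀ i j, A i j ≤ 1)
    (hrow : ∀ i, 0 < rowSum A i)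
    (p q : ℕ) (hp : 1 ≤ p) (hpq : p < q) :
    (∀ i, muOne m A p q i = ∑ j, muTwo m A p q i j) ∧
    (1 / (p : ℝ) - 1 / (q : ℝ)) *
        (-∑ i, muOne m A p q i * Real.logb m (muOne m A p q i)) +
      (1 / (q : ℝ)) *
        (-∑ i, ∑ j, muTwo m A p q i j * Real.logb m (muTwo m A p q i j)) =
      (1 / (p : ℝ)) * Real.logb m (Tsum m A p q) :=
  mu_two_entropy_general m hm A hbin hrow p q hp
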